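/- Let u_β be the fixed point of the canonical substitution φ of a simple Parry number with d_β(1) = t_1⋯t_m. Every left special factor w of u_β with |w| ≤ t_1 is a prefix of u_β. -/

import Mathlib

/-!
Every nonzero letter `Y` of `u_β` ends a block `φ(Y-1) = 0^{t_Y} Y`, so it is preceded by at least
`t_Y` zeros. Induction along the fixed point shows that for `Y ≥ 2` these zeros are preceded by a
nonzero letter `j_Y` depending only on `Y`: the letter in front of the block `φ(Y-1)` is the last
letter `c + 1` of the image of the letter `c` in front of `Y - 1`, and `c` is `0` or `j_{Y-1}`.
Hence, for `r < t_1`, the letter in front of an occurrence of `0^r Y` is determined by `r` and `Y`,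
so a left special factor of length at most `t_1` has no nonzero letter: it is the prefix
`0^{|w|}` of `u_β = 0^{t_1} 1 ⋯`.
-/

/-- The factor of the infinite word `u` starting at position `i`, of length `n`. -/
def factorAt {A : Type*} (u : ℕ → A) (i n : ℕ) : List A :=
  (List.range n).map fun j => u (i + j)

/-- `w` is a factor of the infinite word `u`. -/
def IsFactor {A : Type*} (u : ℕ → A) (w : List A) : Prop :=
  ∃ i, w = factorAt u i w.length

/-- `u` is a fixed point of the substitution `φ`. -/
def SubFixed {A : Type*} (u : ℕ → A) (φ : A → List A) : Prop :=
  ∀ n : ℕ, factorAt u 0 ((factorAt u 0 n).flatMap φ).length = (factorAt u 0 n).flatMap φ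

open List

section Substitution

variable {A B : Type*}

@[simp]
lemma length_factorAt (u : ℕ → A) (i n : ℕ) : (factorAt u i n).length = n := by
  simp [factorAt]

@[simp]
lemma getElem_factorAt (u : ℕ → A) (i n j : ℕ) (hj : j < (factorAt u i n).length) :
    (factorAt u i n)[j] = u (i + j) := by
  simp [factorAt]

lemma factorAt_comp (f : A → B) (u : ℕ → A) (i n : ℕ) :
    factorAt (f ∘ u) i n = (factorAt u i n).map f := by
  simp [factorAt]

lemma IsFactor.map {u : ℕ → A} {w : List A} (f : A → B) (hw : IsFactor u w) :
    IsFactor (f ∘ u) (w.map f) := by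
  obtain ⟨i, hi⟩ := hw
  exact ⟨i, by rw [length_map, factorAt_comp, ← hi]⟩

lemma factorAt_succ_left (u : ℕ → A) (i n : ℕ) :
    factorAt u i (n + 1) = u i :: factorAt u (i + 1) n := by
  simp [factorAt, List.range_succ_eq_map, Nat.add_assoc, Nat.add_comm 1]

lemma IsFactor.exists_cons {u : ℕ → A} {a : A} {w : List A} (hw : IsFactor u (a :: w)) :
    ∃ p, u p = a ∧ ∀ j (hj : j < w.length), u (p + 1 + j) = w[j] := by
  obtain ⟨p, hp⟩ := hw
  rw [length_cons, factorAt_succ_left, cons.injEq] at hp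
  refine ⟨p, hp.1.symm, fun j hj => ?_⟩
  simp [getElem_of_eq hp.2 hj]

/-- For a fixed point `u = φ(u)`, the position where the block `φ (u n)` starts. -/
def blockStart (φ : A → List A) (u : ℕ → A) (n : ℕ) : ℕ :=
  ((factorAt u 0 n).flatMap φ).length

variable {φ : A → List A} {u : ℕ → A}

@[simp]
lemma blockStart_zero : blockStart φ u 0 = 0 := by
  simp [blockStart, factorAt]

lemma blockStart_succ (n : ℕ) :
    blockStart φ u (n + 1) = blockStart φ u n + (φ (u n)).length := by
  simp [blockStart, factorAt, List.range_succ]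

lemma SubFixed.apply_blockStart_add (hu : SubFixed u φ) {n j : ℕ}
    (hj : j < (φ (u n)).length) : u (blockStart φ u n + j) = (φ (u n))[j] := by
  have hsplit : (factorAt u 0 (n + 1)).flatMap φ = (factorAt u 0 n).flatMap φ ++ φ (u n) := by
    simp [factorAt, List.range_succ]
  have hlt : blockStart φ u n + j < ((factorAt u 0 (n + 1)).flatMap φ).length := by
    rw [hsplit, length_append]; exact Nat.add_lt_add_left hj _
  calc u (blockStart φ u n + j)
      = (factorAt u 0 ((factorAt u 0 (n + 1)).flatMap φ).length)[blockStart φ u n + j]'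
          (by simpa using hlt) := by simp
    _ = ((factorAt u 0 (n + 1)).flatMap φ)[blockStart φ u n + j] := getElem_of_eq (hu _) _
    _ = (φ (u n))[j] := by
      rw [getElem_of_eq hsplit hlt, getElem_append_right (by simp [blockStart])]
      simp [blockStart]

lemma exists_blockStart_le_lt (hφ : ∀ a, φ a ≠ []) (p : ℕ) :
    ∃ k, blockStart φ u k ≤ p ∧ p < blockStart φ u (k + 1) := by
  induction p with
  | zero => exact ⟨0, le_refl _, by simp [blockStart_succ, List.length_pos_iff, hφ]⟩
  | succ p ih =>
    obtain ⟨k, hk, hpk⟩ := ih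
    by_cases hnext : p + 1 < blockStart φ u (k + 1)
    · exact ⟨k, by omega, hnext⟩
    · have := List.length_pos_iff.mpr (hφ (u (k + 1)))
      exact ⟨k + 1, by omega, by rw [blockStart_succ]; omega⟩

lemma SubFixed.map {ψ : B → List B} (f : A → B) (hf : ∀ a, ψ (f a) = (φ a).map f)
    (hu : SubFixed u φ) : SubFixed (f ∘ u) ψ := by
  intro n
  have himage : (factorAt (f ∘ u) 0 n).flatMap ψ = ((factorAt u 0 n).flatMap φ).map f := by
    simp [factorAt_comp, List.flatMap_map, hf, List.map_flatMap]
  rw [himage, length_map, factorAt_comp, hu n]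

end Substitution

/-- The canonical substitution `φ` of the statement, with the letters `Fin m` read as naturals. -/
def parrySubst (m : ℕ) (t : ℕ → ℕ) (i : ℕ) : List ℕ :=
  if i + 1 < m then replicate (t (i + 1)) 0 ++ [i + 1] else replicate (t m) 0

lemma length_parrySubst (m : ℕ) (t : ℕ → ℕ) (i : ℕ) :
    (parrySubst m t i).length = if i + 1 < m then t (i + 1) + 1 else t m := by
  unfold parrySubst; split_ifs <;> simp

lemma getElem_parrySubst {m : ℕ} {t : ℕ → ℕ} {i j : ℕ} (hj : j < (parrySubst m t i).length) :
    (parrySubst m t i)[j] = if i + 1 < m ∧ j = t (i + 1) then i + 1 else 0 := by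
  unfold parrySubst at hj ⊢
  by_cases hi : i + 1 < m
  · simp only [hi, if_true, length_append, length_replicate, length_singleton] at hj ⊢
    rw [getElem_append]
    by_cases hlast : j = t (i + 1)
    · subst hlast; simp
    · rw [dif_pos (by simp; omega)]
      simp [hlast]
  · simp [hi]

/-- `j_k` of the paper: the letter that precedes the block `0^{t_k}` in front of each occurrence
of `k ≥ 2`. -/
def precedingLetter (t : ℕ → ℕ) : ℕ → ℕ
  | 0 => 1
  | k + 1 => if 2 ≤ k ∧ t k = 0 then precedingLetter t k + 1 else 1

lemma one_le_precedingLetter (t : ℕ → ℕ) (k : ℕ) : 1 ≤ precedingLetter t k :=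
  match k with
  | 0 => le_rfl
  | k + 1 => by unfold precedingLetter; split_ifs <;> omega

lemma precedingLetter_lt (t : ℕ → ℕ) {k : ℕ} (hk : 2 ≤ k) : precedingLetter t k < k := by
  induction k, hk using Nat.le_induction with
  | base => simp [precedingLetter]
  | succ k hk ih => simp only [precedingLetter]; split_ifs <;> omega

structure IsParryFixedPoint (m : ℕ) (t : ℕ → ℕ) (v : ℕ → ℕ) : Prop where
  two_le : 2 ≤ m
  one_le_t_one : 1 ≤ t 1
  one_le_t_m : 1 ≤ t m
  lt : ∀ n, v n < m
  subFixed : SubFixed v (parrySubst m t)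

namespace IsParryFixedPoint

variable {m : ℕ} {t : ℕ → ℕ} {v : ℕ → ℕ}

local notation "B" => blockStart (parrySubst m t) v

lemma parrySubst_ne_nil (h : IsParryFixedPoint m t v) (i : ℕ) : parrySubst m t i ≠ [] := by
  have := h.one_le_t_m
  rw [← length_pos_iff, length_parrySubst]; split_ifs <;> omega

lemma apply_blockStart_add (h : IsParryFixedPoint m t v) {k j : ℕ}
    (hj : j < (parrySubst m t (v k)).length) :
    v (B k + j) = if v k + 1 < m ∧ j = t (v k + 1) then v k + 1 else 0 := by
  rw [h.subFixed.apply_blockStart_add hj, getElem_parrySubst]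

lemma apply_zero (h : IsParryFixedPoint m t v) : v 0 = 0 := by
  have := h.apply_blockStart_add (k := 0) (j := 0)
    (length_pos_iff.mpr (h.parrySubst_ne_nil _))
  simp only [blockStart_zero, Nat.add_zero] at this
  split_ifs at this <;> omega

lemma blockStart_one (h : IsParryFixedPoint m t v) : B 1 = t 1 + 1 := by
  have := h.two_le
  rw [blockStart_succ, blockStart_zero, length_parrySubst, h.apply_zero, if_pos (by omega)]
  simp

lemma apply_of_lt_t_one (h : IsParryFixedPoint m t v) {j : ℕ} (hj : j < t 1) : v j = 0 := by
  have hlen : j < (parrySubst m t (v 0)).length := by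
    have := h.blockStart_one
    rw [blockStart_succ, blockStart_zero] at this
    omega
  have := h.apply_blockStart_add hlen
  simp only [blockStart_zero, Nat.zero_add, h.apply_zero] at this
  rwa [if_neg (by omega)] at this

lemma lt_blockStart (h : IsParryFixedPoint m t v) {k : ℕ} (hk : 1 ≤ k) : k < B k := by
  induction k, hk using Nat.le_induction with
  | base => have := h.one_le_t_one; rw [h.blockStart_one]; omega
  | succ k hk ih =>
    have := length_pos_iff.mpr (h.parrySubst_ne_nil (v k))
    rw [blockStart_succ]; omega

lemma exists_eq_blockStart_add_of_ne_zero (h : IsParryFixedPoint m t v) {q : ℕ} (hq : v q ≠ 0) :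
    ∃ k, v k + 1 < m ∧ v q = v k + 1 ∧ q = B k + t (v q) ∧
      ∀ i < t (v q), v (q - 1 - i) = 0 := by
  obtain ⟨k, hkq, hqk⟩ := exists_blockStart_le_lt (u := v) h.parrySubst_ne_nil q
  rw [blockStart_succ] at hqk
  have hq' := h.apply_blockStart_add (k := k) (j := q - B k) (by omega)
  rw [Nat.add_sub_cancel' hkq] at hq'
  split_ifs at hq' with hlast
  · refine ⟨k, hlast.1, hq', by rw [hq']; omega, fun i hi => ?_⟩
    rw [hq'] at hi
    have := h.apply_blockStart_add (k := k) (j := q - B k - 1 - i)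
      (by rw [length_parrySubst, if_pos hlast.1]; omega)
    rw [if_neg (by omega)] at this
    rwa [show B k + (q - B k - 1 - i) = q - 1 - i by omega] at this
  · exact absurd hq' hq

lemma apply_blockStart_succ_sub_one (h : IsParryFixedPoint m t v) (k : ℕ) :
    v (B (k + 1) - 1) = if v k + 1 < m then v k + 1 else 0 := by
  have hlen := length_pos_iff.mpr (h.parrySubst_ne_nil (v k))
  have := h.apply_blockStart_add (k := k) (j := (parrySubst m t (v k)).length - 1) (by omega)
  rw [blockStart_succ, Nat.add_sub_assoc hlen, this, length_parrySubst]
  split_ifs <;> simp_all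

lemma apply_eq_precedingLetter_of_adjacent (h : IsParryFixedPoint m t v) {k : ℕ}
    (hspec : 2 ≤ v (k + 1) → v (k + 1 - t (v (k + 1)) - 1) = precedingLetter t (v (k + 1)))
    (hk : v k ≠ 0) (hk1 : v (k + 1) ≠ 0) :
    2 ≤ v (k + 1) ∧ t (v (k + 1)) = 0 ∧ v k = precedingLetter t (v (k + 1)) := by
  obtain ⟨-, -, -, -, hzero⟩ := h.exists_eq_blockStart_add_of_ne_zero hk1
  have ht : t (v (k + 1)) = 0 := by
    by_contra ht
    exact hk (hzero 0 (by omega))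
  have h2 : 2 ≤ v (k + 1) := by
    by_contra h2
    have := h.one_le_t_one
    rw [show v (k + 1) = 1 by omega] at ht
    omega
  refine ⟨h2, ht, ?_⟩
  simpa [ht] using hspec h2

theorem precedingLetter_spec (h : IsParryFixedPoint m t v) (q : ℕ) (hq : 2 ≤ v q) :
    t (v q) < q ∧ v (q - t (v q) - 1) = precedingLetter t (v q) := by
  induction q using Nat.strong_induction_on with
  | _ q ih =>
  obtain ⟨k, -, hqk, hq_eq, -⟩ := h.exists_eq_blockStart_add_of_ne_zero (by omega : v q ≠ 0)
  obtain ⟨k, rfl⟩ : ∃ k', k = k' + 1 :=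
    Nat.exists_eq_succ_of_ne_zero (by rintro rfl; rw [h.apply_zero] at hqk; omega)
  have hkB := h.lt_blockStart (Nat.le_add_left 1 k)
  have hspec (h2 : 2 ≤ v (k + 1)) := (ih (k + 1) (by omega) h2).2
  refine ⟨by omega, ?_⟩
  rw [show q - t (v q) - 1 = B (k + 1) - 1 by omega, h.apply_blockStart_succ_sub_one, hqk]
  by_cases hk : v k = 0
  · rw [hk, if_pos (by have := h.two_le; omega), precedingLetter, if_neg]
    rintro ⟨h2, ht⟩
    have := hspec h2
    rw [ht, Nat.sub_zero, Nat.add_sub_cancel, hk] at this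
    have := one_le_precedingLetter t (v (k + 1))
    omega
  · obtain ⟨h2, ht, hkj⟩ := h.apply_eq_precedingLetter_of_adjacent hspec hk (by omega)
    have hkm : v k + 1 < m := by
      have := precedingLetter_lt t h2
      have := h.lt (k + 1)
      omega
    rw [if_pos hkm, precedingLetter, if_pos ⟨h2, ht⟩, hkj]

theorem apply_eq_of_forall_eq_zero (h : IsParryFixedPoint m t v) {p r : ℕ} (hr : r < t 1)
    (hzero : ∀ i < r, v (p + 1 + i) = 0) (hY : v (p + 1 + r) ≠ 0) :
    v p = if 2 ≤ v (p + 1 + r) ∧ r = t (v (p + 1 + r)) then precedingLetter t (v (p + 1 + r))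
      else 0 := by
  obtain ⟨-, -, -, -, hzero'⟩ := h.exists_eq_blockStart_add_of_ne_zero hY
  by_cases hcase : 2 ≤ v (p + 1 + r) ∧ r = t (v (p + 1 + r))
  · rw [if_pos hcase]
    have := (h.precedingLetter_spec _ hcase.1).2
    rwa [← hcase.2, show p + 1 + r - r - 1 = p by omega] at this
  · rw [if_neg hcase]
    rcases lt_or_ge r (t (v (p + 1 + r))) with hlt | hge
    · simpa using hzero' r hlt
    · have h2 : 2 ≤ v (p + 1 + r) := by
        by_contra h2
        rw [show v (p + 1 + r) = 1 by omega] at hge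
        omega
      have := (h.precedingLetter_spec _ h2).2
      rw [show p + 1 + r - t (v (p + 1 + r)) - 1 = p + 1 + (r - t (v (p + 1 + r)) - 1) by omega,
        hzero _ (by omega)] at this
      have := one_le_precedingLetter t (v (p + 1 + r))
      omega

theorem eq_factorAt_zero_of_leftSpecial (h : IsParryFixedPoint m t v) {w : List ℕ} {a b : ℕ}
    (hab : a ≠ b) (ha : IsFactor v (a :: w)) (hb : IsFactor v (b :: w)) (hw : w.length ≤ t 1) :
    w = factorAt v 0 w.length := by
  obtain ⟨p, rfl, hp⟩ := ha.exists_cons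
  obtain ⟨p', rfl, hp'⟩ := hb.exists_cons
  have hzero : ∀ r (hr : r < w.length), w[r] = 0 := by
    intro r
    induction r using Nat.strong_induction_on with
    | _ r ih =>
    intro hr
    by_contra hne
    apply hab
    rw [h.apply_eq_of_forall_eq_zero (p := p) (r := r) (by omega)
        (fun i hi => by rw [hp i (by omega)]; exact ih i hi _) (by rwa [hp r hr]),
      h.apply_eq_of_forall_eq_zero (p := p') (r := r) (by omega)
        (fun i hi => by rw [hp' i (by omega)]; exact ih i hi _) (by rwa [hp' r hr]),
      hp r hr, hp' r hr]
  refine ext_getElem (by simp) fun i hi _ => ?_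
  rw [hzero i hi, getElem_factorAt, Nat.zero_add, h.apply_of_lt_t_one (by omega)]

end IsParryFixedPoint

/-- Every left special factor `w` of `u_β` with `|w| ≤ t_1` is a prefix of `u_β`. -/
theorem stmt_11 (m : ℕ) (hm : 2 ≤ m) (t : ℕ → ℕ)
    (ht1 : 1 ≤ t 1) (htm : 1 ≤ t m)
    (φ : Fin m → List (Fin m))
    (hφ : ∀ i : Fin m, φ i =
      if h : (i : ℕ) + 1 < m then
        List.replicate (t ((i : ℕ) + 1)) (⟨0, by omega⟩ : Fin m) ++ [(⟨(i : ℕ) + 1, h⟩ : Fin m)]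
      else
        List.replicate (t m) (⟨0, by omega⟩ : Fin m))
    (u : ℕ → Fin m) (hu : SubFixed u φ) :
    ∀ w : List (Fin m),
      (∃ a b : Fin m, a ≠ b ∧ IsFactor u (a :: w) ∧ IsFactor u (b :: w)) →
      w.length ≤ t 1 →
      w = factorAt u 0 w.length := by
  rintro w ⟨a, b, hab, ha, hb⟩ hw
  have hφval (i : Fin m) : parrySubst m t i = (φ i).map Fin.val := by
    rw [hφ i, parrySubst]
    split_ifs <;> simp
  have hv : IsParryFixedPoint m t (Fin.val ∘ u) :=
    ⟨hm, ht1, htm, fun n => (u n).isLt, hu.map Fin.val hφval⟩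
  apply (map_injective_iff.mpr Fin.val_injective)
  rw [← factorAt_comp, ← length_map (f := Fin.val)]
  exact hv.eq_factorAt_zero_of_leftSpecial (Fin.val_injective.ne hab) (ha.map Fin.val)
    (hb.map Fin.val) (by simpa)
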